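/- In any algebra (S,*,') satisfying the three axioms, the identity x''' = x' holds for all x in S. -/

import Mathlib

/-!
Write `e x = x ⋆ x′` and `f x = x′ ⋆ x`. Axiom (E3) is associativity up to a double prime on the
last factor; together with (E1) it gives `e (x′) = f x` and `x ⋆ f x = x`. Through `e (x′) = f x`,
(E2) makes `f x` commute with `f (x′′)`, which yields `f x ⋆ f (x′′) = f (x′′)` and hence
`x ⋆ f (x′′) = x`; consequently `(a ⋆ b) ⋆ f b = a ⋆ b` and `x ⋆ x′′′ = x ⋆ x′`. Commuting `e x` with
`f (x′)` then gives the dual identity `f (x′) = e x`, and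
`x′′′ = f (x′′) ⋆ x′′′ = e (x′) ⋆ x′′′ = x′ ⋆ (x′′ ⋆ x′′′′′) = x′ ⋆ (x′′ ⋆ x′′′) = x′`.
-/

namespace PrimeAlgebra

variable {S : Type*} {m : S → S → S} {i : S → S}

local infixl:70 " ⋆ " => m
local postfix:max "′" => i

theorem mul_inv_mul_inv_inv (E1 : ∀ x, x ⋆ x′ ⋆ x = x)
    (E3 : ∀ x y z, x ⋆ y ⋆ z = x ⋆ (y ⋆ z′′)) (x : S) : x ⋆ (x′ ⋆ x′′) = x := by
  rw [← E3, E1]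

theorem inv_mul_inv_inv (E1 : ∀ x, x ⋆ x′ ⋆ x = x)
    (E3 : ∀ x y z, x ⋆ y ⋆ z = x ⋆ (y ⋆ z′′)) (x : S) : x′ ⋆ x′′ = x′ ⋆ x :=
  calc x′ ⋆ x′′ = x′ ⋆ (x′′ ⋆ (x′′′ ⋆ x′′′′)) := by rw [mul_inv_mul_inv_inv E1 E3]
    _ = x′ ⋆ (x′′ ⋆ x′′′) ⋆ x := by rw [E3, E3]
    _ = x′ ⋆ x := by rw [mul_inv_mul_inv_inv E1 E3]

theorem mul_inv_mul_self (E1 : ∀ x, x ⋆ x′ ⋆ x = x)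
    (E3 : ∀ x y z, x ⋆ y ⋆ z = x ⋆ (y ⋆ z′′)) (x : S) : x ⋆ (x′ ⋆ x) = x := by
  rw [← inv_mul_inv_inv E1 E3, mul_inv_mul_inv_inv E1 E3]

theorem inv_mul_self_mul_inv (E1 : ∀ x, x ⋆ x′ ⋆ x = x)
    (E3 : ∀ x y z, x ⋆ y ⋆ z = x ⋆ (y ⋆ z′′)) (x : S) : x′ ⋆ x ⋆ x′ = x′ := by
  rw [← inv_mul_inv_inv E1 E3, E1]

theorem inv_inv_mul_inv_mul_self (E1 : ∀ x, x ⋆ x′ ⋆ x = x)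
    (E3 : ∀ x y z, x ⋆ y ⋆ z = x ⋆ (y ⋆ z′′)) (x : S) : x′′ ⋆ (x′ ⋆ x) = x′′ :=
  calc x′′ ⋆ (x′ ⋆ x) = x′′ ⋆ x′ ⋆ x := by rw [E3, inv_mul_inv_inv E1 E3]
    _ = x′′ ⋆ x′′′ ⋆ x := by rw [inv_mul_inv_inv E1 E3]
    _ = x′′ := by rw [E3, mul_inv_mul_self E1 E3]

theorem inv_inv_inv_mul_inv_inv (E1 : ∀ x, x ⋆ x′ ⋆ x = x)
    (E3 : ∀ x y z, x ⋆ y ⋆ z = x ⋆ (y ⋆ z′′)) (x : S) : x′′′ ⋆ x′′ = x′′′ ⋆ x :=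
  calc x′′′ ⋆ x′′ = x′′′ ⋆ (x′′ ⋆ x′ ⋆ x′′) := by rw [inv_mul_self_mul_inv E1 E3]
    _ = x′′′ ⋆ (x′′ ⋆ x′) ⋆ x := (E3 _ _ _).symm
    _ = x′′′ ⋆ x := by rw [inv_inv_mul_inv_mul_self E1 E3]

theorem inv_mul_self_mul_inv_inv_inv_mul_self (E1 : ∀ x, x ⋆ x′ ⋆ x = x)
    (E2 : ∀ x y, x ⋆ x′ ⋆ (y′ ⋆ y) = y′ ⋆ y ⋆ (x ⋆ x′))
    (E3 : ∀ x y z, x ⋆ y ⋆ z = x ⋆ (y ⋆ z′′)) (x : S) : x′ ⋆ x ⋆ (x′′′ ⋆ x) = x′′′ ⋆ x :=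
  calc x′ ⋆ x ⋆ (x′′′ ⋆ x) = x′ ⋆ x′′ ⋆ (x′′′ ⋆ x′′) := by
        rw [inv_mul_inv_inv E1 E3, inv_inv_inv_mul_inv_inv E1 E3]
    _ = x′′′ ⋆ x′′ ⋆ (x′ ⋆ x′′) := E2 _ _
    _ = x′′′ ⋆ (x′′ ⋆ x′′′) ⋆ x := by rw [← E3 (x′′′ ⋆ x′′) x′ x, E3 x′′′ x′′ x′]
    _ = x′′′ ⋆ x := by rw [inv_mul_inv_inv E1 E3, inv_inv_mul_inv_mul_self E1 E3]

theorem mul_inv_inv_inv_mul_self (E1 : ∀ x, x ⋆ x′ ⋆ x = x)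
    (E2 : ∀ x y, x ⋆ x′ ⋆ (y′ ⋆ y) = y′ ⋆ y ⋆ (x ⋆ x′))
    (E3 : ∀ x y z, x ⋆ y ⋆ z = x ⋆ (y ⋆ z′′)) (x : S) : x ⋆ (x′′′ ⋆ x) = x :=
  calc x ⋆ (x′′′ ⋆ x) = x ⋆ (x′ ⋆ x ⋆ (x′′′ ⋆ x′′′′)) := by
        rw [← inv_mul_self_mul_inv_inv_inv_mul_self E1 E2 E3, ← inv_inv_inv_mul_inv_inv E1 E3,
          inv_mul_inv_inv E1 E3]
    _ = x ⋆ (x′ ⋆ x) ⋆ x′ ⋆ x := by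
        rw [← E3 (x′ ⋆ x) x′′′ x′′, ← E3 x (x′ ⋆ x ⋆ x′′′) x, ← E3 x (x′ ⋆ x) x′]
    _ = x := by rw [mul_inv_mul_self E1 E3, E1]

theorem mul_mul_inv_mul_self (E1 : ∀ x, x ⋆ x′ ⋆ x = x)
    (E2 : ∀ x y, x ⋆ x′ ⋆ (y′ ⋆ y) = y′ ⋆ y ⋆ (x ⋆ x′))
    (E3 : ∀ x y z, x ⋆ y ⋆ z = x ⋆ (y ⋆ z′′)) (a b : S) : a ⋆ b ⋆ (b′ ⋆ b) = a ⋆ b :=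
  calc a ⋆ b ⋆ (b′ ⋆ b) = a ⋆ b ⋆ b′ ⋆ b := by rw [← inv_mul_inv_inv E1 E3 b, E3 (a ⋆ b)]
    _ = a ⋆ (b ⋆ (b′′′ ⋆ b′′′′)) := by rw [E3 a b b′, E3 a _ b, E3 b b′′′ b′′]
    _ = a ⋆ b := by
        rw [inv_mul_inv_inv E1 E3, inv_inv_inv_mul_inv_inv E1 E3, mul_inv_inv_inv_mul_self E1 E2 E3]

theorem mul_inv_inv_inv (E1 : ∀ x, x ⋆ x′ ⋆ x = x)
    (E2 : ∀ x y, x ⋆ x′ ⋆ (y′ ⋆ y) = y′ ⋆ y ⋆ (x ⋆ x′))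
    (E3 : ∀ x y z, x ⋆ y ⋆ z = x ⋆ (y ⋆ z′′)) (x : S) : x ⋆ x′′′ = x ⋆ x′ :=
  calc x ⋆ x′′′ = x ⋆ (x′′′ ⋆ x′′ ⋆ x′′′) := by rw [inv_mul_self_mul_inv E1 E3]
    _ = x ⋆ (x′′′ ⋆ x) ⋆ x′ := by rw [inv_inv_inv_mul_inv_inv E1 E3, E3 x (x′′′ ⋆ x) x′]
    _ = x ⋆ x′ := by rw [mul_inv_inv_inv_mul_self E1 E2 E3]

theorem inv_inv_mul_inv (E1 : ∀ x, x ⋆ x′ ⋆ x = x)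
    (E2 : ∀ x y, x ⋆ x′ ⋆ (y′ ⋆ y) = y′ ⋆ y ⋆ (x ⋆ x′))
    (E3 : ∀ x y z, x ⋆ y ⋆ z = x ⋆ (y ⋆ z′′)) (x : S) : x′′ ⋆ x′ = x ⋆ x′ :=
  calc x′′ ⋆ x′ = x′′ ⋆ (x′ ⋆ x) ⋆ x′ := by rw [inv_inv_mul_inv_mul_self E1 E3]
    _ = x′′ ⋆ x′ ⋆ (x ⋆ x′′′) := by rw [← inv_mul_inv_inv E1 E3, ← E3, ← E3]
    _ = x ⋆ x′ ⋆ (x′′ ⋆ x′) := by rw [mul_inv_inv_inv E1 E2 E3, E2]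
    _ = x ⋆ x′ := mul_mul_inv_mul_self E1 E2 E3 _ _

theorem inv_inv_inv (E1 : ∀ x, x ⋆ x′ ⋆ x = x)
    (E2 : ∀ x y, x ⋆ x′ ⋆ (y′ ⋆ y) = y′ ⋆ y ⋆ (x ⋆ x′))
    (E3 : ∀ x y z, x ⋆ y ⋆ z = x ⋆ (y ⋆ z′′)) (x : S) : x′′′ = x′ :=
  calc x′′′ = x′′′ ⋆ x′′ ⋆ x′′′ := (inv_mul_self_mul_inv E1 E3 _).symm
    _ = x′ ⋆ x′′ ⋆ x′′′ := by rw [inv_inv_mul_inv E1 E2 E3 x′]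
    _ = x′ ⋆ (x′′ ⋆ x′′′) := by rw [E3, mul_inv_inv_inv E1 E2 E3]
    _ = x′ := mul_inv_mul_inv_inv E1 E3 x′

end PrimeAlgebra

theorem stmt (S : Type*) (m : S → S → S) (i : S → S)
    (E1 : ∀ x, m (m x (i x)) x = x)
    (E2 : ∀ x y, m (m x (i x)) (m (i y) y) = m (m (i y) y) (m x (i x)))
    (E3 : ∀ x y z, m (m x y) z = m x (m y (i (i z)))) :
    ∀ x, i (i (i x)) = i x :=
  PrimeAlgebra.inv_inv_inv E1 E2 E3
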